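/- arXiv:2509.19961 — 2 statements merged into one kernel-verified Lean document; each statement's English description precedes it below -/
import Mathlib

section
/- Every maximal run of T is finite, the map t ↦ λ·t is a strictly increasing bijection of T onto itself mapping T⁻ onto T⁻ and T⁺ onto T⁺, and there exists a nonzero integer d such that λ·R_j = R_{j+d} for every j ∈ ℤ; in particular b_{j+d} = b_j for all j ∈ ℤ, i.e. the bi-infinite run-length sequence (b_j)_{j∈ℤ} is periodic. -/
/-- `t_{(m,n)} = (n − βm)/(α − β)`, the coordinate of `(m,n)` along the direction `(1,α)`
in the basis `(1,α), (1,β)`. -/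
noncomputable def tcoord (α β : ℝ) (m n : ℤ) : ℝ := ((n : ℝ) - β * m) / (α - β)

/-- `s_{(m,n)} = (αm − n)/(α − β)`, the coordinate of `(m,n)` along the direction `(1,β)`. -/
noncomputable def scoord (α β : ℝ) (m n : ℤ) : ℝ := (α * m - (n : ℝ)) / (α - β)

/-- The parallelogram `R_{(m,n)}` with opposite vertices `(0,0)` and `(m,n)` whose sides are
parallel to `(1,α)` and `(1,β)`:
`{a·(1,α) + b·(1,β) : a between 0 and t_{(m,n)}, b between 0 and s_{(m,n)}}`. -/
def Rpar (α β : ℝ) (m n : ℤ) : Set (ℝ × ℝ) :=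
  {p | ∃ a b : ℝ, a ∈ Set.uIcc 0 (tcoord α β m n) ∧ b ∈ Set.uIcc 0 (scoord α β m n) ∧
    p = (a + b, a * α + b * β)}

/-- The interior of the parallelogram `R_{(m,n)}` contains no point of `ℤ²`. -/
def NoLatticeInterior (α β : ℝ) (m n : ℤ) : Prop :=
  ∀ p ∈ interior (Rpar α β m n), ¬ ∃ k l : ℤ, p = ((k : ℝ), (l : ℝ))

/-- `(p,q)` (with `q ≥ 1` and `p − qα < 0`) is a *good lower approximation of the second kind*
of `α`: `|p − qα| < |p′ − q′α|` for every `(p′,q′) ≠ (p,q)` with `1 ≤ q′ ≤ q` and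
`p′ − q′α < 0`. -/
def GoodLower (α : ℝ) (p q : ℤ) : Prop :=
  1 ≤ q ∧ (p : ℝ) - q * α < 0 ∧
    ∀ p' q' : ℤ, (p', q') ≠ (p, q) → 1 ≤ q' → q' ≤ q → (p' : ℝ) - q' * α < 0 →
      |(p : ℝ) - q * α| < |(p' : ℝ) - q' * α|

/-- `(p,q)` (with `q ≥ 1` and `p − qα > 0`) is a *good upper approximation of the second kind*
of `α`. -/
def GoodUpper (α : ℝ) (p q : ℤ) : Prop :=
  1 ≤ q ∧ 0 < (p : ℝ) - q * α ∧
    ∀ p' q' : ℤ, (p', q') ≠ (p, q) → 1 ≤ q' → q' ≤ q → 0 < (p' : ℝ) - q' * α →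
      |(p : ℝ) - q * α| < |(p' : ℝ) - q' * α|

/-- `T⁻`: the set of values `t_{(m,n)} > 0` with `n − αm < 0` such that the interior of
`R_{(m,n)}` contains no point of `ℤ²`. -/
def Tminus (α β : ℝ) : Set ℝ :=
  {t | ∃ m n : ℤ, t = tcoord α β m n ∧ 0 < t ∧ (n : ℝ) - α * m < 0 ∧
    NoLatticeInterior α β m n}

/-- `T⁺`: the set of values `t_{(m,n)} > 0` with `n − αm > 0` such that the interior of
`R_{(m,n)}` contains no point of `ℤ²`. -/
def Tplus (α β : ℝ) : Set ℝ :=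
  {t | ∃ m n : ℤ, t = tcoord α β m n ∧ 0 < t ∧ 0 < (n : ℝ) - α * m ∧
    NoLatticeInterior α β m n}

/-- `T = T⁺ ∪ T⁻`. -/
def Tset (α β : ℝ) : Set ℝ := Tplus α β ∪ Tminus α β

/-- Given an increasing enumeration `e : ℤ ≃o T` of `T`, a *run* is a nonempty set of
consecutive indices all of whose elements lie in `T⁻`, or all of whose elements lie
in `T⁺`. -/
def IsRun (α β : ℝ) (e : ℤ ≃o ↥(Tset α β)) (S : Set ℤ) : Prop :=
  S.Nonempty ∧ S.OrdConnected ∧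
    ((∀ j ∈ S, ((e j : ℝ)) ∈ Tminus α β) ∨ (∀ j ∈ S, ((e j : ℝ)) ∈ Tplus α β))

/-- A *maximal run* is a run that is maximal under inclusion. -/
def IsMaxRun (α β : ℝ) (e : ℤ ≃o ↥(Tset α β)) (S : Set ℤ) : Prop :=
  IsRun α β e S ∧ ∀ S' : Set ℤ, IsRun α β e S' → S ⊆ S' → S' = S

/-- `ρ : ℤ → Set ℤ` lists the maximal runs in increasing order. -/
def IsRunEnum (α β : ℝ) (e : ℤ ≃o ↥(Tset α β)) (ρ : ℤ → Set ℤ) : Prop :=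
  (∀ j : ℤ, IsMaxRun α β e (ρ j)) ∧
  (∀ S : Set ℤ, IsMaxRun α β e S → ∃ j : ℤ, ρ j = S) ∧
  (∀ i j : ℤ, i < j → ∀ x ∈ ρ i, ∀ y ∈ ρ j, x < y)


/-!
The integer matrix `A` acts on `ℤ²` bijectively and is diagonal in the basis `(1, α), (1, β)`:
it multiplies `t`-coordinates by `λ` and `s`-coordinates by `μ`. Since `R_{(m,n)}` is
lattice-free iff no lattice point has `t` strictly between `0` and `t_{(m,n)}` and `s` strictly
between `0` and `s_{(m,n)}`, `A` preserves lattice-freeness and the sign of `s`; hence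
`λ·T± = T±`. Consequently `T⁺` and `T⁻` are
unbounded and accumulate at `0`, and since they are disjoint (`β` is a quadratic irrational),
every run is finite. Multiplication by `λ` is then an order automorphism of `T ≅ ℤ`, i.e. an
index shift `j ↦ j + c` with `c ≠ 0`; it permutes the maximal runs, and the induced permutation
of `ℤ` is again a nonzero shift `d`.
-/

open Set Function

lemma Set.uIoo_subset_uIoo_of_mem {L : Type*} [LinearOrder L] {a x y : L} (h : x ∈ uIoo a y) :
    uIoo a x ⊆ uIoo a y :=
  uIoo_subset_Ioo ⟨inf_le_left, le_sup_left⟩ (Ioo_subset_Icc_self h)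

lemma pow_mul_mem_iff {M : Type*} [Monoid M] {c : M} {Q : Set M} (hQ : ∀ t, c * t ∈ Q ↔ t ∈ Q)
    (k : ℕ) (t : M) : c ^ k * t ∈ Q ↔ t ∈ Q := by
  induction k generalizing t with
  | zero => simp
  | succ k ih => rw [pow_succ', mul_assoc, hQ, ih]

lemma bijOn_mul_left_of_mul_mem_iff {G : Type*} [GroupWithZero G] {c : G} (hc : c ≠ 0)
    {Q : Set G} (hQ : ∀ t, c * t ∈ Q ↔ t ∈ Q) : BijOn (c * ·) Q Q :=
  ⟨fun t ht => (hQ t).2 ht, fun _ _ _ _ h => mul_left_cancel₀ hc h,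
    fun t ht => ⟨c⁻¹ * t, (hQ _).1 (by rwa [mul_inv_cancel_left₀ hc]), mul_inv_cancel_left₀ hc t⟩⟩

lemma irrational_of_sq_sub_mul_add_one {x : ℝ} (T : ℤ) (hx : x ^ 2 - T * x + 1 = 0)
    (hx₁ : x ≠ 1) (hx₂ : x ≠ -1) : Irrational x := by
  rintro ⟨q, rfl⟩
  have hq : q ^ 2 - T * q + 1 = 0 := by exact_mod_cast hx
  have hint : IsIntegral ℤ q := by
    refine ⟨.X ^ 2 - .C T * .X + 1, by monicity!, ?_⟩
    simp only [Polynomial.eval₂_add, Polynomial.eval₂_sub, Polynomial.eval₂_mul,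
      Polynomial.eval₂_X_pow, Polynomial.eval₂_C, Polynomial.eval₂_X, Polynomial.eval₂_one]
    simpa using hq
  obtain ⟨y, rfl⟩ := IsIntegrallyClosed.isIntegral_iff.mp hint
  have hy : y * (T - y) = 1 := by
    have : (y : ℚ) * (T - y) = 1 := by
      simp only [algebraMap_int_eq, eq_intCast] at hq
      linear_combination -hq
    exact_mod_cast this
  rcases Int.eq_one_or_neg_one_of_mul_eq_one hy with rfl | rfl <;> simp_all

section OrderedField

variable {K : Type*} [Field K] [LinearOrder K] [IsStrictOrderedRing K] {lam : K}

lemma exists_mem_gt_of_mul_mem_iff [Archimedean K] {P : Set K} (hlam0 : 0 < lam)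
    (hlam1 : lam < 1) (hP : ∀ t, lam * t ∈ P ↔ t ∈ P) {u : K} (hu : u ∈ P) (hu0 : 0 < u) (x : K) :
    ∃ v ∈ P, x < v := by
  obtain ⟨k, hk⟩ := pow_unbounded_of_one_lt (x / u) ((one_lt_inv₀ hlam0).2 hlam1)
  refine ⟨lam⁻¹ ^ k * u, (pow_mul_mem_iff hP k _).1 ?_, (div_lt_iff₀ hu0).1 hk⟩
  rwa [← mul_assoc, ← mul_pow, mul_inv_cancel₀ hlam0.ne', one_pow, one_mul]

lemma exists_mem_lt_of_mul_mem_iff [Archimedean K] {P : Set K} (hlam1 : lam < 1)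
    (hP : ∀ t, lam * t ∈ P ↔ t ∈ P) {u : K} (hu : u ∈ P) (hu0 : 0 < u) {x : K} (hx : 0 < x) :
    ∃ v ∈ P, v < x := by
  obtain ⟨k, hk⟩ := exists_pow_lt_of_lt_one (div_pos hx hu0) hlam1
  exact ⟨lam ^ k * u, (pow_mul_mem_iff hP k u).2 hu, (lt_div_iff₀ hu0).1 hk⟩

lemma mul_mem_uIoo_zero_iff {c a b : K} (hc : 0 < c) : c * a ∈ uIoo 0 (c * b) ↔ a ∈ uIoo 0 b := by
  rcases le_total 0 b with hb | hb
  · rw [uIoo_of_le hb, uIoo_of_le (mul_nonneg hc.le hb), mem_Ioo, mem_Ioo,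
      mul_pos_iff_of_pos_left hc, mul_lt_mul_iff_right₀ hc]
  · rw [uIoo_of_ge hb, uIoo_of_ge (mul_nonpos_of_nonneg_of_nonpos hc.le hb), mem_Ioo, mem_Ioo,
      mul_lt_mul_iff_right₀ hc, show c * a < 0 ↔ a < 0 from
        ⟨fun h => neg_of_mul_neg_right h hc.le, mul_neg_of_pos_of_neg hc⟩]

lemma exists_orderIso_coe_apply_eq_mul {ι : Type*} [Preorder ι] {X : Set K}
    (hlam : 0 < lam) (hX : ∀ t, lam * t ∈ X ↔ t ∈ X) (e : ι ≃o X) :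
    ∃ g : ι ≃o ι, ∀ j, (e (g j) : K) = lam * e j := by
  let mulX : X → X := fun t => ⟨lam * t, (hX t).2 t.2⟩
  have hmono : StrictMono mulX := fun s t hst =>
    show lam * (s : K) < lam * t from mul_lt_mul_of_pos_left hst hlam
  have hsurj : Surjective mulX := fun t =>
    ⟨⟨lam⁻¹ * t, (hX _).1 (by rw [mul_inv_cancel_left₀ hlam.ne']; exact t.2)⟩,
      Subtype.ext (mul_inv_cancel_left₀ hlam.ne' t)⟩
  exact ⟨e.trans ((hmono.orderIsoOfSurjective mulX hsurj).trans e.symm), fun j => by simp [mulX]⟩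

end OrderedField

theorem Set.OrdConnected.finite_of_exists_notMem {ι : Type*} [LinearOrder ι]
    [LocallyFiniteOrder ι] {S : Set ι} (hS : S.OrdConnected) (hup : ∀ j ∈ S, ∃ k, j < k ∧ k ∉ S)
    (hdown : ∀ j ∈ S, ∃ k, k < j ∧ k ∉ S) : S.Finite := by
  rcases S.eq_empty_or_nonempty with rfl | ⟨j₀, hj₀⟩
  · exact finite_empty
  obtain ⟨a, ha, haS⟩ := hdown j₀ hj₀
  obtain ⟨b, hb, hbS⟩ := hup j₀ hj₀
  refine BddBelow.finite_of_bddAbove ⟨a, fun j hj => ?_⟩ ⟨b, fun j hj => ?_⟩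
  · by_contra h
    exact haS (hS.out hj hj₀ ⟨(not_le.1 h).le, ha.le⟩)
  · by_contra h
    exact hbS (hS.out hj₀ hj ⟨hb.le, (not_le.1 h).le⟩)

theorem OrderIso.apply_eq_add_apply_zero (f : ℤ ≃o ℤ) (j : ℤ) : f j = j + f 0 := by
  have hsucc (i : ℤ) : f (i + 1) = f i + 1 := by
    simpa only [Order.succ_eq_add_one] using f.map_succ i
  induction j using Int.induction_on with
  | zero => simp
  | succ i ih => rw [hsucc, ih]; ring
  | pred i ih =>
    have := hsucc (-i - 1)
    rw [sub_add_cancel] at this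
    omega

lemma eq_zero_of_image_add_eq {G : Type*} [AddCommGroup G] [LinearOrder G] [IsOrderedAddMonoid G]
    {S : Set G} (hfin : S.Finite) (hne : S.Nonempty) {c : G} (h : (· + c) '' S = S) : c = 0 := by
  obtain ⟨x, hx, hmax⟩ := exists_max_image S id hfin hne
  obtain ⟨y, hy, rfl⟩ := (h.symm ▸ hx : x ∈ (· + c) '' S)
  have h₁ : y + c + c ≤ y + c := hmax _ (h ▸ mem_image_of_mem _ hx)
  have h₂ : y ≤ y + c := hmax y hy
  exact le_antisymm (by simpa using h₁) (by simpa using h₂)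

lemma exists_add_eq_image_of_image_mem_range {X : Type*} [Preorder X] {ρ : ℤ → Set X}
    (hne : ∀ j, (ρ j).Nonempty) (hlt : ∀ i j, i < j → ∀ x ∈ ρ i, ∀ y ∈ ρ j, x < y) (g : X ≃o X)
    (hg : ∀ j, ∃ i, ρ i = g '' ρ j) (hg' : ∀ j, ∃ i, ρ i = g.symm '' ρ j) :
    ∃ d, ∀ j, ρ (j + d) = g '' ρ j := by
  have hlt_iff (i j : ℤ) : i < j ↔ ∀ x ∈ ρ i, ∀ y ∈ ρ j, x < y := by
    refine ⟨hlt i j, fun h => lt_of_not_ge fun hji => ?_⟩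
    obtain ⟨x, hx⟩ := hne i
    obtain ⟨y, hy⟩ := hne j
    rcases hji.lt_or_eq with hji | rfl
    · exact (h x hx y hy).not_gt (hlt j i hji y hy x hx)
    · exact (h x hx x hx).false
  have hinj : Injective ρ := by
    intro i j hij
    have hsymm : i < j ↔ j < i := by rw [hlt_iff, hlt_iff, hij]
    exact le_antisymm (not_lt.1 fun h => lt_asymm h (hsymm.2 h))
      (not_lt.1 fun h => lt_asymm h (hsymm.1 h))
  choose σ hσ using hg
  have hmono : StrictMono σ := fun i j hij => (hlt_iff _ _).2 (by
    rw [hσ, hσ]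
    rintro _ ⟨x, hx, rfl⟩ _ ⟨y, hy, rfl⟩
    exact g.lt_iff_lt.2 (hlt i j hij x hx y hy))
  have hsurj : Surjective σ := fun i => by
    obtain ⟨k, hk⟩ := hg' i
    exact ⟨k, hinj (by rw [hσ, hk, g.image_symm_image])⟩
  refine ⟨σ 0, fun j => ?_⟩
  rw [← hσ j]
  exact congrArg ρ ((StrictMono.orderIsoOfSurjective σ hmono hsurj).apply_eq_add_apply_zero j).symm

section Coordinates

variable {α β : ℝ}

lemma tcoord_eq_and_scoord_eq (hαβ : α ≠ β) {m n : ℤ} {a b : ℝ} (hm : (m : ℝ) = a + b)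
    (hn : (n : ℝ) = a * α + b * β) : tcoord α β m n = a ∧ scoord α β m n = b := by
  have hne : α - β ≠ 0 := sub_ne_zero.2 hαβ
  constructor <;> · simp only [tcoord, scoord]; rw [div_eq_iff hne, hm, hn]; ring

lemma cast_eq_tcoord_add_scoord (hαβ : α ≠ β) (m n : ℤ) :
    (m : ℝ) = tcoord α β m n + scoord α β m n ∧
      (n : ℝ) = tcoord α β m n * α + scoord α β m n * β := by
  have hne : α - β ≠ 0 := sub_ne_zero.2 hαβ
  rw [tcoord, scoord]
  constructor <;> · field_simp; ring

lemma finite_setOf_abs_intCast_le (R : ℝ) : {m : ℤ | |(m : ℝ)| ≤ R}.Finite := by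
  refine (finite_Icc (-⌈R⌉) ⌈R⌉).subset fun m hm => ?_
  have hm : |m| ≤ ⌈R⌉ := by
    have : ((|m| : ℤ) : ℝ) ≤ ⌈R⌉ := by push_cast; exact hm.out.trans (Int.le_ceil R)
    exact_mod_cast this
  exact abs_le.1 hm

lemma finite_setOf_coords_mem (hαβ : α ≠ β) {K : Set (ℝ × ℝ)} (hK : Bornology.IsBounded K) :
    {p : ℤ × ℤ | (tcoord α β p.1 p.2, scoord α β p.1 p.2) ∈ K}.Finite := by
  obtain ⟨C, hC⟩ := hK.subset_closedBall 0
  set R := C * (2 + |α| + |β|)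
  refine ((finite_setOf_abs_intCast_le R).prod (finite_setOf_abs_intCast_le R)).subset ?_
  rintro ⟨m, n⟩ hp
  have hts := hC hp
  rw [mem_closedBall_zero_iff, Prod.norm_def, max_le_iff, Real.norm_eq_abs,
    Real.norm_eq_abs] at hts
  obtain ⟨hm, hn⟩ := cast_eq_tcoord_add_scoord hαβ m n
  set t := tcoord α β m n
  set s := scoord α β m n
  have hC0 : 0 ≤ C := (abs_nonneg t).trans hts.1
  constructor
  · calc |(m : ℝ)| ≤ |t| + |s| := hm ▸ abs_add_le t s
      _ ≤ R := by nlinarith [abs_nonneg α, abs_nonneg β]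
  · calc |(n : ℝ)| ≤ |t| * |α| + |s| * |β| := by
          rw [hn, ← abs_mul, ← abs_mul]; exact abs_add_le _ _
      _ ≤ R := by nlinarith [abs_nonneg α, abs_nonneg β, abs_nonneg t, abs_nonneg s]

end Coordinates

section Parallelogram

variable {α β : ℝ}

noncomputable def coordHomeomorph (hαβ : α ≠ β) : (ℝ × ℝ) ≃ₜ (ℝ × ℝ) where
  toFun p := (p.1 + p.2, p.1 * α + p.2 * β)
  invFun p := ((p.2 - β * p.1) / (α - β), (α * p.1 - p.2) / (α - β))
  left_inv p := by
    have hne : α - β ≠ 0 := sub_ne_zero.2 hαβ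
    ext <;> · field_simp; ring
  right_inv p := by
    have hne : α - β ≠ 0 := sub_ne_zero.2 hαβ
    ext <;> · field_simp; ring
  continuous_toFun := by fun_prop
  continuous_invFun := by fun_prop

lemma Rpar_eq_image (hαβ : α ≠ β) (m n : ℤ) :
    Rpar α β m n =
      coordHomeomorph hαβ '' (uIcc 0 (tcoord α β m n) ×ˢ uIcc 0 (scoord α β m n)) := by
  ext p
  constructor
  · rintro ⟨a, b, ha, hb, rfl⟩
    exact ⟨(a, b), ⟨ha, hb⟩, rfl⟩
  · rintro ⟨⟨a, b⟩, ⟨ha, hb⟩, rfl⟩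
    exact ⟨a, b, ha, hb, rfl⟩

lemma noLatticeInterior_iff (hαβ : α ≠ β) (m n : ℤ) :
    NoLatticeInterior α β m n ↔ ∀ q : ℤ × ℤ,
      tcoord α β q.1 q.2 ∈ uIoo 0 (tcoord α β m n) →
        scoord α β q.1 q.2 ∉ uIoo 0 (scoord α β m n) := by
  have hint : interior (Rpar α β m n) = coordHomeomorph hαβ '' (uIoo 0 (tcoord α β m n) ×ˢ
      uIoo 0 (scoord α β m n)) := by
    rw [Rpar_eq_image, ← Homeomorph.image_interior, interior_prod_eq, uIcc, uIcc, interior_Icc,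
      interior_Icc, uIoo, uIoo]
  simp only [NoLatticeInterior, hint, (coordHomeomorph hαβ).image_eq_preimage_symm]
  constructor
  · intro h q ht hs
    exact h ((q.1 : ℝ), (q.2 : ℝ)) ⟨ht, hs⟩ ⟨q.1, q.2, rfl⟩
  · rintro h _ hp ⟨k, l, rfl⟩
    exact h (k, l) hp.1 hp.2

/-- A lattice point of the box with least `t`-coordinate spans a lattice-free parallelogram. -/
lemma exists_noLatticeInterior (hαβ : α ≠ β) {t₁ s₁ : ℝ}
    (h : ∃ m n : ℤ, tcoord α β m n ∈ Ioo 0 t₁ ∧ scoord α β m n ∈ uIoo 0 s₁) :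
    ∃ m n : ℤ, tcoord α β m n ∈ Ioo 0 t₁ ∧ scoord α β m n ∈ uIoo 0 s₁ ∧
      NoLatticeInterior α β m n := by
  set F := {p : ℤ × ℤ | (tcoord α β p.1 p.2, scoord α β p.1 p.2) ∈ Ioo 0 t₁ ×ˢ uIoo 0 s₁}
  have hF : Set.Finite F :=
    finite_setOf_coords_mem hαβ (Metric.isBounded_Ioo 0 t₁ |>.prod (Metric.isBounded_Ioo _ _))
  obtain ⟨m, n, hmn⟩ := h
  obtain ⟨⟨m, n⟩, ⟨ht, hs⟩, hmin⟩ :=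
    exists_min_image F (fun p => tcoord α β p.1 p.2) hF ⟨(m, n), hmn⟩
  refine ⟨m, n, ht, hs, (noLatticeInterior_iff hαβ m n).2 fun q hqt hqs => ?_⟩
  rw [uIoo_of_lt ht.1] at hqt
  have hqF : q ∈ F := ⟨⟨hqt.1, hqt.2.trans ht.2⟩, uIoo_subset_uIoo_of_mem hs hqs⟩
  exact (hmin q hqF).not_gt hqt.2

end Parallelogram

section Tsign

variable {α β : ℝ}

/-- `T⁻ = Tsign α β (Ioi 0)` and `T⁺ = Tsign α β (Iio 0)`: the sign of `n − αm` is that of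
`−s_{(m,n)}`. -/
def Tsign (α β : ℝ) (S : Set ℝ) : Set ℝ :=
  {t | ∃ m n : ℤ, t = tcoord α β m n ∧ 0 < t ∧ scoord α β m n ∈ S ∧ NoLatticeInterior α β m n}

lemma Tminus_eq_Tsign (hβα : β < α) : Tminus α β = Tsign α β (Ioi 0) := by
  ext t
  simp only [Tminus, Tsign, scoord, mem_Ioi, div_pos_iff_of_pos_right (sub_pos.2 hβα), sub_pos,
    sub_neg]

lemma Tplus_eq_Tsign (hβα : β < α) : Tplus α β = Tsign α β (Iio 0) := by
  ext t
  simp only [Tplus, Tsign, scoord, mem_Iio, div_lt_iff₀ (sub_pos.2 hβα), zero_mul, sub_pos,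
    sub_neg]

lemma pos_of_mem_Tset {t : ℝ} (ht : t ∈ Tset α β) : 0 < t := by
  rcases ht with ⟨m, n, -, ht, -⟩ | ⟨m, n, -, ht, -⟩ <;> exact ht

lemma Tminus_nonempty (hβα : β < α) : (Tminus α β).Nonempty := by
  rw [Tminus_eq_Tsign hβα]
  obtain ⟨q, hβq, hqα⟩ := exists_rat_btwn hβα
  have hden : (0 : ℝ) < q.den := by positivity
  rw [Rat.cast_def, lt_div_iff₀ hden] at hβq
  rw [Rat.cast_def, div_lt_iff₀ hden] at hqα
  set t := tcoord α β q.den q.num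
  set s := scoord α β q.den q.num
  have ht : 0 < t := div_pos (by push_cast; linarith) (sub_pos.2 hβα)
  have hs : 0 < s := div_pos (by push_cast; linarith) (sub_pos.2 hβα)
  obtain ⟨m, n, ht', hs', hN⟩ := exists_noLatticeInterior hβα.ne' (t₁ := t + 1) (s₁ := s + 1)
    ⟨q.den, q.num, ⟨ht, by linarith⟩, by rw [uIoo_of_lt (by linarith)]; exact ⟨hs, by linarith⟩⟩
  rw [uIoo_of_lt (by linarith)] at hs'
  exact ⟨_, m, n, rfl, ht'.1, hs'.1, hN⟩

lemma Tplus_nonempty (hβα : β < α) : (Tplus α β).Nonempty := by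
  rw [Tplus_eq_Tsign hβα]
  set t := tcoord α β 0 1
  set s := scoord α β 0 1
  have ht : 0 < t := by
    simp only [t, tcoord]; push_cast
    exact div_pos (by simp) (sub_pos.2 hβα)
  have hs : s < 0 := by
    simp only [s, scoord]; push_cast
    exact div_neg_of_neg_of_pos (by simp) (sub_pos.2 hβα)
  obtain ⟨m, n, ht', hs', hN⟩ := exists_noLatticeInterior hβα.ne' (t₁ := t + 1) (s₁ := s - 1)
    ⟨0, 1, ⟨ht, by linarith⟩, by rw [uIoo_of_gt (by linarith)]; exact ⟨by linarith, hs⟩⟩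
  rw [uIoo_of_gt (by linarith)] at hs'
  exact ⟨_, m, n, rfl, ht'.1, hs'.2, hN⟩

lemma eq_of_tcoord_eq (hαβ : α ≠ β) (hβ : Irrational β) {m n m' n' : ℤ}
    (h : tcoord α β m n = tcoord α β m' n') : m = m' ∧ n = n' := by
  have h' : (n : ℝ) - β * m = n' - β * m' := by
    rwa [tcoord, tcoord, div_left_inj' (sub_ne_zero.2 hαβ)] at h
  obtain rfl : m = m' := by
    by_contra hm
    exact (hβ.intCast_mul (sub_ne_zero.2 hm)).ne_int (n - n') (by push_cast; linarith)
  exact ⟨rfl, by exact_mod_cast (by linarith : (n : ℝ) = n')⟩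

lemma disjoint_Tsign (hαβ : α ≠ β) (hβ : Irrational β) {S S' : Set ℝ} (h : Disjoint S S') :
    Disjoint (Tsign α β S) (Tsign α β S') := by
  rw [Set.disjoint_left]
  rintro _ ⟨m, n, rfl, -, hs, -⟩ ⟨m', n', he, -, hs', -⟩
  obtain ⟨rfl, rfl⟩ := eq_of_tcoord_eq hαβ hβ he
  exact Set.disjoint_left.1 h hs hs'

lemma disjoint_Tplus_Tminus (hβα : β < α) (hβ : Irrational β) :
    Disjoint (Tplus α β) (Tminus α β) := by
  rw [Tplus_eq_Tsign hβα, Tminus_eq_Tsign hβα]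
  exact disjoint_Tsign hβα.ne' hβ Ioi_disjoint_Iio_same.symm

end Tsign

section Action

variable {α β lam mu : ℝ}

def ScalesCoords (α β lam mu : ℝ) (f : ℤ × ℤ → ℤ × ℤ) : Prop :=
  ∀ p : ℤ × ℤ, tcoord α β (f p).1 (f p).2 = lam * tcoord α β p.1 p.2 ∧
    scoord α β (f p).1 (f p).2 = mu * scoord α β p.1 p.2

variable {f : ℤ × ℤ → ℤ × ℤ}

lemma noLatticeInterior_map_iff (hαβ : α ≠ β) (hlam : 0 < lam) (hmu : 0 < mu)
    (hf : ScalesCoords α β lam mu f) (hsurj : Surjective f) (p : ℤ × ℤ) :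
    NoLatticeInterior α β (f p).1 (f p).2 ↔ NoLatticeInterior α β p.1 p.2 := by
  rw [noLatticeInterior_iff hαβ, noLatticeInterior_iff hαβ, hsurj.forall]
  simp only [(hf _).1, (hf _).2, mul_mem_uIoo_zero_iff hlam, mul_mem_uIoo_zero_iff hmu]

lemma mul_mem_Tsign_iff (hαβ : α ≠ β) (hlam : 0 < lam) (hmu : 0 < mu)
    (hf : ScalesCoords α β lam mu f) (hsurj : Surjective f) {S : Set ℝ}
    (hS : ∀ x, mu * x ∈ S ↔ x ∈ S) (t : ℝ) : lam * t ∈ Tsign α β S ↔ t ∈ Tsign α β S := by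
  constructor
  · rintro ⟨m, n, he, ht, hs, hN⟩
    obtain ⟨p, hp⟩ := hsurj (m, n)
    obtain ⟨hpt, hps⟩ := hf p
    have hNp := noLatticeInterior_map_iff hαβ hlam hmu hf hsurj p
    rw [hp] at hpt hps hNp
    exact ⟨p.1, p.2, mul_left_cancel₀ hlam.ne' (he.trans hpt), (mul_pos_iff_of_pos_left hlam).1 ht,
      (hS _).1 (hps ▸ hs), hNp.1 hN⟩
  · rintro ⟨m, n, rfl, ht, hs, hN⟩
    obtain ⟨hpt, hps⟩ := hf (m, n)
    exact ⟨(f (m, n)).1, (f (m, n)).2, hpt.symm, mul_pos hlam ht, hps ▸ (hS _).2 hs,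
      (noLatticeInterior_map_iff hαβ hlam hmu hf hsurj (m, n)).2 hN⟩

end Action

section IntegerMatrix

variable {α β lam mu : ℝ} {A : Matrix (Fin 2) (Fin 2) ℤ}

def mulVecPair (A : Matrix (Fin 2) (Fin 2) ℤ) (p : ℤ × ℤ) : ℤ × ℤ :=
  (A 0 0 * p.1 + A 0 1 * p.2, A 1 0 * p.1 + A 1 1 * p.2)

lemma mulVecPair_surjective (hA : IsUnit A.det) : Surjective (mulVecPair A) := by
  intro p
  obtain ⟨v, hv⟩ :=
    Matrix.mulVec_surjective_iff_isUnit.2 (A.isUnit_iff_isUnit_det.2 hA) ![p.1, p.2]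
  refine ⟨(v 0, v 1), ?_⟩
  have h0 := congrFun hv 0
  have h1 := congrFun hv 1
  simp only [Matrix.mulVec, dotProduct, Fin.sum_univ_two] at h0 h1
  exact Prod.ext h0 h1

lemma eigenvalue_sq_sub_trace_mul_add_det (hAβ0 : (A 0 0 : ℝ) + A 0 1 * β = mu)
    (hAβ1 : (A 1 0 : ℝ) + A 1 1 * β = mu * β) :
    mu ^ 2 - ((A 0 0 + A 1 1 : ℤ) : ℝ) * mu + (A.det : ℝ) = 0 := by
  rw [Matrix.det_fin_two]
  push_cast
  linear_combination ((A 1 1 : ℝ) - mu) * hAβ0 - (A 0 1 : ℝ) * hAβ1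

/-- `mu = A₀₀ + A₀₁ β` is a quadratic irrational, hence so is `β`. -/
lemma irrational_of_eigenvector (hdet : A.det = 1) (hAβ0 : (A 0 0 : ℝ) + A 0 1 * β = mu)
    (hAβ1 : (A 1 0 : ℝ) + A 1 1 * β = mu * β) (hmu : 1 < mu) : Irrational β := by
  have hsq := eigenvalue_sq_sub_trace_mul_add_det hAβ0 hAβ1
  rw [hdet, Int.cast_one] at hsq
  have hirr := irrational_of_sq_sub_mul_add_one _ hsq hmu.ne' (by linarith)
  rw [← hAβ0] at hirr
  exact (hirr.of_intCast_add _).of_intCast_mul _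

variable (hAα0 : (A 0 0 : ℝ) + A 0 1 * α = lam) (hAα1 : (A 1 0 : ℝ) + A 1 1 * α = lam * α)
  (hAβ0 : (A 0 0 : ℝ) + A 0 1 * β = mu) (hAβ1 : (A 1 0 : ℝ) + A 1 1 * β = mu * β)
include hAα0 hAα1 hAβ0 hAβ1

lemma scalesCoords_mulVecPair (hαβ : α ≠ β) : ScalesCoords α β lam mu (mulVecPair A) := by
  rintro ⟨m, n⟩
  obtain ⟨hm, hn⟩ := cast_eq_tcoord_add_scoord hαβ m n
  set t := tcoord α β m n
  set s := scoord α β m n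
  apply tcoord_eq_and_scoord_eq hαβ <;> simp only [mulVecPair] <;> push_cast
  · linear_combination (A 0 0 : ℝ) * hm + (A 0 1 : ℝ) * hn + t * hAα0 + s * hAβ0
  · linear_combination (A 1 0 : ℝ) * hm + (A 1 1 : ℝ) * hn + t * hAα1 + s * hAβ1

lemma mul_mem_Tminus_iff (hβα : β < α) (hA : IsUnit A.det) (hlam : 0 < lam) (hmu : 0 < mu)
    (t : ℝ) : lam * t ∈ Tminus α β ↔ t ∈ Tminus α β := by
  rw [Tminus_eq_Tsign hβα]
  exact mul_mem_Tsign_iff hβα.ne' hlam hmu (scalesCoords_mulVecPair hAα0 hAα1 hAβ0 hAβ1 hβα.ne')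
    (mulVecPair_surjective hA) (fun _ => mul_pos_iff_of_pos_left hmu) t

lemma mul_mem_Tplus_iff (hβα : β < α) (hA : IsUnit A.det) (hlam : 0 < lam) (hmu : 0 < mu)
    (t : ℝ) : lam * t ∈ Tplus α β ↔ t ∈ Tplus α β := by
  rw [Tplus_eq_Tsign hβα]
  exact mul_mem_Tsign_iff hβα.ne' hlam hmu (scalesCoords_mulVecPair hAα0 hAα1 hAβ0 hAβ1 hβα.ne')
    (mulVecPair_surjective hA) (S := Iio 0)
    (fun _ => ⟨fun h => neg_of_mul_neg_right h hmu.le, mul_neg_of_pos_of_neg hmu⟩) t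

end IntegerMatrix

section Runs

variable {α β : ℝ} {e : ℤ ≃o ↥(Tset α β)}

lemma exists_index_gt_mem {Q : Set ℝ} (hQT : Q ⊆ Tset α β) (hQ : ∀ x : ℝ, ∃ v ∈ Q, x < v)
    (j : ℤ) : ∃ k, j < k ∧ (e k : ℝ) ∈ Q := by
  obtain ⟨v, hv, hjv⟩ := hQ (e j)
  exact ⟨e.symm ⟨v, hQT hv⟩, e.lt_symm_apply.2 hjv, by simpa using hv⟩

lemma exists_index_lt_mem {Q : Set ℝ} (hQT : Q ⊆ Tset α β)
    (hQ : ∀ x ∈ Tset α β, ∃ v ∈ Q, v < x) (j : ℤ) : ∃ k, k < j ∧ (e k : ℝ) ∈ Q := by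
  obtain ⟨v, hv, hvj⟩ := hQ (e j) (e j).2
  exact ⟨e.symm ⟨v, hQT hv⟩, e.symm_apply_lt.2 hvj, by simpa using hv⟩

/-- A run stops as soon as an element of the other colour appears, and both colours occur
above and below every element of `T`. -/
lemma IsRun.finite {S : Set ℤ} (hS : IsRun α β e S) (hdisj : Disjoint (Tplus α β) (Tminus α β))
    {lam : ℝ} (hlam0 : 0 < lam) (hlam1 : lam < 1) (hP : ∀ t, lam * t ∈ Tplus α β ↔ t ∈ Tplus α β)
    (hM : ∀ t, lam * t ∈ Tminus α β ↔ t ∈ Tminus α β) (hPne : (Tplus α β).Nonempty)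
    (hMne : (Tminus α β).Nonempty) : S.Finite := by
  obtain ⟨-, hconn, hcol⟩ := hS
  obtain ⟨Q, hQT, hSQ, hQ, u, hu⟩ : ∃ Q ⊆ Tset α β, (∀ j ∈ S, (e j : ℝ) ∉ Q) ∧
      (∀ t, lam * t ∈ Q ↔ t ∈ Q) ∧ Q.Nonempty := by
    rcases hcol with h | h
    · exact ⟨Tplus α β, subset_union_left, fun j hj hj' => disjoint_left.1 hdisj hj' (h j hj),
        hP, hPne⟩
    · exact ⟨Tminus α β, subset_union_right, fun j hj hj' => disjoint_left.1 hdisj (h j hj) hj',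
        hM, hMne⟩
  have hu0 := pos_of_mem_Tset (hQT hu)
  refine hconn.finite_of_exists_notMem (fun j _ => ?_) (fun j _ => ?_)
  · obtain ⟨k, hjk, hk⟩ :=
      exists_index_gt_mem hQT (exists_mem_gt_of_mul_mem_iff hlam0 hlam1 hQ hu hu0) j
    exact ⟨k, hjk, fun hkS => hSQ k hkS hk⟩
  · obtain ⟨k, hkj, hk⟩ := exists_index_lt_mem hQT
      (fun x hx => exists_mem_lt_of_mul_mem_iff hlam1 hQ hu hu0 (pos_of_mem_Tset hx)) j
    exact ⟨k, hkj, fun hkS => hSQ k hkS hk⟩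

lemma coe_apply_symm_mem_iff {g : ℤ ≃o ℤ} {Q : Set ℝ}
    (h : ∀ j, (e (g j) : ℝ) ∈ Q ↔ (e j : ℝ) ∈ Q) (j : ℤ) :
    (e (g.symm j) : ℝ) ∈ Q ↔ (e j : ℝ) ∈ Q := by
  simpa using (h (g.symm j)).symm

variable {g : ℤ ≃o ℤ} (hgM : ∀ j, (e (g j) : ℝ) ∈ Tminus α β ↔ (e j : ℝ) ∈ Tminus α β)
  (hgP : ∀ j, (e (g j) : ℝ) ∈ Tplus α β ↔ (e j : ℝ) ∈ Tplus α β)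
include hgM hgP

lemma IsRun.image {S : Set ℤ} (hS : IsRun α β e S) : IsRun α β e (g '' S) := by
  obtain ⟨hne, hconn, hcol⟩ := hS
  refine ⟨hne.image g, ordConnected_image g, ?_⟩
  rcases hcol with h | h
  · exact Or.inl (forall_mem_image.2 fun j hj => (hgM j).2 (h j hj))
  · exact Or.inr (forall_mem_image.2 fun j hj => (hgP j).2 (h j hj))

lemma IsMaxRun.image {S : Set ℤ} (hS : IsMaxRun α β e S) : IsMaxRun α β e (g '' S) := by
  refine ⟨hS.1.image hgM hgP, fun S' hS' hsub => ?_⟩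
  have hrun : IsRun α β e (g.symm '' S') := hS'.image (coe_apply_symm_mem_iff hgM)
    (coe_apply_symm_mem_iff hgP)
  have hsub' : S ⊆ g.symm '' S' := by
    rw [g.symm.image_eq_preimage_symm, g.symm_symm]
    exact image_subset_iff.1 hsub
  rw [← hS.2 _ hrun hsub', g.image_symm_image]

end Runs
/-- `t ↦ lam t` induces the index shift `j ↦ j + c` on `T`, which permutes the maximal runs;
the induced permutation of their indices is again a shift, by `d ≠ 0` since `c ≠ 0`. -/
lemma IsRunEnum.exists_shift {α β lam : ℝ} {e : ℤ ≃o ↥(Tset α β)} {ρ : ℤ → Set ℤ}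
    (hρ : IsRunEnum α β e ρ) (hlam0 : 0 < lam) (hlam1 : lam ≠ 1)
    (hM : ∀ t, lam * t ∈ Tminus α β ↔ t ∈ Tminus α β)
    (hP : ∀ t, lam * t ∈ Tplus α β ↔ t ∈ Tplus α β) (hfin : ∀ S, IsRun α β e S → S.Finite) :
    ∃ d : ℤ, d ≠ 0 ∧
      (∀ j, (lam * ·) '' ((fun i : ℤ => (e i : ℝ)) '' ρ j) =
        (fun i : ℤ => (e i : ℝ)) '' ρ (j + d)) ∧
      ∀ j, (ρ (j + d)).ncard = (ρ j).ncard := by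
  obtain ⟨hmax, hall, hlt⟩ := hρ
  obtain ⟨g, hg⟩ := exists_orderIso_coe_apply_eq_mul hlam0 (fun t => or_congr (hP t) (hM t)) e
  have hgM (j : ℤ) : (e (g j) : ℝ) ∈ Tminus α β ↔ (e j : ℝ) ∈ Tminus α β := hg j ▸ hM _
  have hgP (j : ℤ) : (e (g j) : ℝ) ∈ Tplus α β ↔ (e j : ℝ) ∈ Tplus α β := hg j ▸ hP _
  obtain ⟨d, hd⟩ := exists_add_eq_image_of_image_mem_range (fun j => (hmax j).1.1) hlt g
    (fun j => hall _ ((hmax j).image hgM hgP))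
    (fun j => hall _
      ((hmax j).image (coe_apply_symm_mem_iff hgM) (coe_apply_symm_mem_iff hgP)))
  refine ⟨d, fun hd0 => ?_, fun j => ?_, fun j => ?_⟩
  · have hshift : (· + g 0) '' ρ 0 = ρ 0 := by
      rw [show (· + g 0) = g from funext fun j => (g.apply_eq_add_apply_zero j).symm, ← hd 0,
        hd0, zero_add]
    have hg0 := hg 0
    rw [eq_zero_of_image_add_eq (hfin _ (hmax 0).1) (hmax 0).1.1 hshift] at hg0
    exact hlam1 (mul_right_cancel₀ (pos_of_mem_Tset (e 0).2).ne' (by rw [one_mul]; exact hg0.symm))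
  · rw [hd, image_image, image_image]
    simp only [hg]
  · rw [hd]
    exact ncard_image_of_injective _ g.injective

theorem stmt12_general (A : Matrix (Fin 2) (Fin 2) ℤ) (hdet : A.det = 1)
    (lam mu α β : ℝ)
    (hlam0 : 0 < lam) (hlam1 : lam < 1) (hmu : 1 < mu)
    (hAα0 : (A 0 0 : ℝ) + A 0 1 * α = lam)
    (hAα1 : (A 1 0 : ℝ) + A 1 1 * α = lam * α)
    (hAβ0 : (A 0 0 : ℝ) + A 0 1 * β = mu)
    (hAβ1 : (A 1 0 : ℝ) + A 1 1 * β = mu * β)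
    (hβα : β < α) :
    (∀ (e : ℤ ≃o ↥(Tset α β)) (S : Set ℤ), IsMaxRun α β e S → S.Finite) ∧
    StrictMonoOn (fun t : ℝ => lam * t) (Tset α β) ∧
    Set.BijOn (fun t : ℝ => lam * t) (Tset α β) (Tset α β) ∧
    Set.BijOn (fun t : ℝ => lam * t) (Tminus α β) (Tminus α β) ∧
    Set.BijOn (fun t : ℝ => lam * t) (Tplus α β) (Tplus α β) ∧
    (∀ (e : ℤ ≃o ↥(Tset α β)) (ρ : ℤ → Set ℤ), IsRunEnum α β e ρ →
      ∃ d : ℤ, d ≠ 0 ∧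
        (∀ j : ℤ,
          (fun t : ℝ => lam * t) '' ((fun i : ℤ => (e i : ℝ)) '' ρ j) =
            (fun i : ℤ => (e i : ℝ)) '' ρ (j + d)) ∧
        (∀ j : ℤ, (ρ (j + d)).ncard = (ρ j).ncard)) := by
  have hmu0 : 0 < mu := by linarith
  have hA : IsUnit A.det := hdet ▸ isUnit_one
  have hM := mul_mem_Tminus_iff hAα0 hAα1 hAβ0 hAβ1 hβα hA hlam0 hmu0
  have hP := mul_mem_Tplus_iff hAα0 hAα1 hAβ0 hAβ1 hβα hA hlam0 hmu0
  have hdisj := disjoint_Tplus_Tminus hβα (irrational_of_eigenvector hdet hAβ0 hAβ1 hmu)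
  have hfin (e : ℤ ≃o ↥(Tset α β)) (S : Set ℤ) (hS : IsRun α β e S) : S.Finite :=
    hS.finite hdisj hlam0 hlam1 hP hM (Tplus_nonempty hβα) (Tminus_nonempty hβα)
  refine ⟨fun e S hS => hfin e S hS.1, fun x _ y _ hxy => mul_lt_mul_of_pos_left hxy hlam0,
    bijOn_mul_left_of_mul_mem_iff hlam0.ne' fun t => or_congr (hP t) (hM t),
    bijOn_mul_left_of_mul_mem_iff hlam0.ne' hM, bijOn_mul_left_of_mul_mem_iff hlam0.ne' hP,
    fun e ρ hρ => hρ.exists_shift hlam0 hlam1.ne hM hP (hfin e)⟩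

/-- Every maximal run of `T` is finite, the map `t ↦ λ·t` is a strictly
increasing bijection of `T` onto itself mapping `T⁻` onto `T⁻` and `T⁺` onto `T⁺`, and for
any increasing enumeration `(R_j)` of the maximal runs there is a nonzero integer `d` with
`λ·R_j = R_{j+d}` for every `j`; in particular the run-length sequence `(b_j)` satisfies
`b_{j+d} = b_j` for all `j`, i.e. it is periodic. -/
theorem stmt12 (A : Matrix (Fin 2) (Fin 2) ℤ) (hdet : A.det = 1)
    (lam mu α β : ℝ)
    (hlam0 : 0 < lam) (hlam1 : lam < 1) (hmu : 1 < mu)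
    (hAα0 : (A 0 0 : ℝ) + A 0 1 * α = lam)
    (hAα1 : (A 1 0 : ℝ) + A 1 1 * α = lam * α)
    (hAβ0 : (A 0 0 : ℝ) + A 0 1 * β = mu)
    (hAβ1 : (A 1 0 : ℝ) + A 1 1 * β = mu * β)
    (hβα : β < α) (hα : 0 < α) :
    (∀ (e : ℤ ≃o ↥(Tset α β)) (S : Set ℤ), IsMaxRun α β e S → S.Finite) ∧
    StrictMonoOn (fun t : ℝ => lam * t) (Tset α β) ∧
    Set.BijOn (fun t : ℝ => lam * t) (Tset α β) (Tset α β) ∧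
    Set.BijOn (fun t : ℝ => lam * t) (Tminus α β) (Tminus α β) ∧
    Set.BijOn (fun t : ℝ => lam * t) (Tplus α β) (Tplus α β) ∧
    (∀ (e : ℤ ≃o ↥(Tset α β)) (ρ : ℤ → Set ℤ), IsRunEnum α β e ρ →
      ∃ d : ℤ, d ≠ 0 ∧
        (∀ j : ℤ,
          (fun t : ℝ => lam * t) '' ((fun i : ℤ => (e i : ℝ)) '' ρ j) =
            (fun i : ℤ => (e i : ℝ)) '' ρ (j + d)) ∧
        (∀ j : ℤ, (ρ (j + d)).ncard = (ρ j).ncard)) :=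
  stmt12_general A hdet lam mu α β hlam0 hlam1 hmu hAα0 hAα1 hAβ0 hAβ1 hβα
end

section
/- Let A, B ∈ SL(2,ℤ) with trace(A) > 2 and trace(B) > 2, and let u_A, u_B ∈ ℝ be the slopes of their expanding eigenspaces, i.e. A·(1,u_A)ᵀ = μ_A·(1,u_A)ᵀ and B·(1,u_B)ᵀ = μ_B·(1,u_B)ᵀ with μ_A > 1 and μ_B > 1 (u_A and u_B are then irrational). Let |u_A| = [a₀; a₁, a₂, …] and |u_B| = [b₀; b₁, b₂, …] be the continued fraction expansions of |u_A| and |u_B|. If there exist integers m, n ≥ 0 such that a_{m+i} = b_{n+i} for all i ≥ 0, then there exist nonzero integers k, l and a matrix C ∈ GL(2,ℤ) such that C·Aᵏ·C⁻¹ = Bˡ or C·Aᵏ·C⁻¹ = −Bˡ. -/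
/-!
A tail of the continued fraction of `|u|` is the expansion of a complete quotient of `|u|`,
which is `GL(2,ℤ)`-equivalent to `u`. Equal tails therefore give `G ∈ GL(2,ℤ)` carrying the
line of slope `u_A` onto the line of slope `u_B`, and `G⁻¹ B G` has `(1, u_A)` as an
eigenvector with eigenvalue `μ_B`. The logarithms of the eigenvalues of the matrices of
`SL(2,ℤ)` on this line form a subgroup of `ℝ`; it is discrete, since an eigenvalue `μ > 1` of
such a matrix is `> 2` (its trace `μ + μ⁻¹` is an integer `≥ 3`), hence cyclic. So
`μ_A ^ k = μ_B ^ l` for some `k, l > 0`. Then `G A^k` and `B^l G` agree on `(1, u_A)`, and as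
`u_A` is irrational an integer matrix is determined by its value there.
-/

/-- `a : ℕ → ℤ` is the sequence of partial quotients of the continued fraction expansion of
`x`, given by the Gauss map: there is a sequence `v` of complete quotients with `v 0 = x`,
`a k = ⌊v k⌋` and `v (k+1) = 1/(v k − ⌊v k⌋)`. -/
def GaussCF (x : ℝ) (a : ℕ → ℤ) : Prop :=
  ∃ v : ℕ → ℝ, v 0 = x ∧ ∀ k : ℕ, a k = ⌊v k⌋ ∧ v (k + 1) = (v k - ⌊v k⌋)⁻¹

open Matrix

theorem Irrational.abs {x : ℝ} (hx : Irrational x) : Irrational |x| := by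
  rcases abs_choice x with h | h <;> rw [h]
  exacts [hx, hx.neg]

theorem Irrational.eq_zero_of_intCast_add_mul_eq_zero {u : ℝ} (hu : Irrational u) {p q : ℤ}
    (h : (p : ℝ) + q * u = 0) : p = 0 ∧ q = 0 := by
  obtain rfl | hq := eq_or_ne q 0
  · exact ⟨by simpa using h, rfl⟩
  · refine absurd ?_ hu
    refine ⟨-p / q, ?_⟩
    push_cast
    field_simp
    linarith

theorem Matrix.pow_mulVec_of_mulVec_eq_smul {n R : Type*} [Fintype n] [DecidableEq n] [CommRing R]
    {A : Matrix n n R} {v : n → R} {μ : R} (h : A *ᵥ v = μ • v) (k : ℕ) :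
    (A ^ k) *ᵥ v = μ ^ k • v := by
  induction k with
  | zero => simp
  | succ k ih => rw [pow_succ, ← mulVec_mulVec, h, mulVec_smul, ih, smul_smul, pow_succ']

noncomputable abbrev castMatrix : Matrix (Fin 2) (Fin 2) ℤ →+* Matrix (Fin 2) (Fin 2) ℝ :=
  (Int.castRingHom ℝ).mapMatrix

theorem castMatrix_mulVec_slope (M : Matrix (Fin 2) (Fin 2) ℤ) (u : ℝ) :
    castMatrix M *ᵥ ![1, u] = ![M 0 0 + M 0 1 * u, M 1 0 + M 1 1 * u] := by
  ext i
  fin_cases i <;> simp [mulVec, dotProduct, Fin.sum_univ_two]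

theorem castMatrix_mulVec_slope_eq_smul_iff {M : Matrix (Fin 2) (Fin 2) ℤ} {u μ : ℝ} :
    castMatrix M *ᵥ ![1, u] = μ • ![1, u] ↔
      (M 0 0 : ℝ) + M 0 1 * u = μ ∧ (M 1 0 : ℝ) + M 1 1 * u = μ * u := by
  rw [castMatrix_mulVec_slope, ← List.ofFn_inj]
  simp

theorem castMatrix_inv_mulVec_mulVec {M : Matrix (Fin 2) (Fin 2) ℤ} (hM : IsUnit M.det)
    (v : Fin 2 → ℝ) : castMatrix M⁻¹ *ᵥ (castMatrix M *ᵥ v) = v := by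
  rw [mulVec_mulVec, ← map_mul, nonsing_inv_mul M hM, map_one, one_mulVec]

theorem castMatrix_inv_mulVec_slope {M : Matrix (Fin 2) (Fin 2) ℤ} {x y c : ℝ}
    (hdet : IsUnit M.det) (hc : c ≠ 0) (h : castMatrix M *ᵥ ![1, x] = c • ![1, y]) :
    castMatrix M⁻¹ *ᵥ ![1, y] = c⁻¹ • ![1, x] := by
  rw [← castMatrix_inv_mulVec_mulVec hdet ![1, x], h, mulVec_smul, smul_smul,
    inv_mul_cancel₀ hc, one_smul]

theorem eq_of_castMatrix_mulVec_slope_eq {u : ℝ} (hu : Irrational u)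
    {M N : Matrix (Fin 2) (Fin 2) ℤ} (h : castMatrix M *ᵥ ![1, u] = castMatrix N *ᵥ ![1, u]) :
    M = N := by
  rw [castMatrix_mulVec_slope, castMatrix_mulVec_slope, ← List.ofFn_inj] at h
  simp only [List.ofFn_succ, List.ofFn_zero, Matrix.cons_val_zero, Matrix.cons_val_succ,
    List.cons.injEq, and_true] at h
  obtain ⟨h0, h1⟩ := h
  obtain ⟨e00, e01⟩ := hu.eq_zero_of_intCast_add_mul_eq_zero (p := M 0 0 - N 0 0)
    (q := M 0 1 - N 0 1) (by push_cast; linarith)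
  obtain ⟨e10, e11⟩ := hu.eq_zero_of_intCast_add_mul_eq_zero (p := M 1 0 - N 1 0)
    (q := M 1 1 - N 1 1) (by push_cast; linarith)
  ext i j
  fin_cases i <;> fin_cases j <;> simp <;> omega

def MapsSlope (M : Matrix (Fin 2) (Fin 2) ℤ) (x y : ℝ) : Prop :=
  ∃ c : ℝ, c ≠ 0 ∧ castMatrix M *ᵥ ![1, x] = c • ![1, y]

/-- `x` and `y` lie in the same orbit of `GL(2,ℤ)` acting by Möbius transformations. -/
def GLEquiv (x y : ℝ) : Prop :=
  ∃ G : Matrix (Fin 2) (Fin 2) ℤ, IsUnit G.det ∧ MapsSlope G x y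

theorem MapsSlope.mul {M N : Matrix (Fin 2) (Fin 2) ℤ} {x y z : ℝ}
    (hM : MapsSlope M x y) (hN : MapsSlope N y z) : MapsSlope (N * M) x z := by
  obtain ⟨c, hc, hMx⟩ := hM
  obtain ⟨d, hd, hNy⟩ := hN
  refine ⟨d * c, mul_ne_zero hd hc, ?_⟩
  rw [map_mul, ← mulVec_mulVec, hMx, mulVec_smul, hNy, smul_smul, mul_comm]

namespace GLEquiv

theorem refl (x : ℝ) : GLEquiv x x :=
  ⟨1, by simp, 1, one_ne_zero, by simp⟩

theorem symm {x y : ℝ} : GLEquiv x y → GLEquiv y x := by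
  rintro ⟨G, hG, c, hc, hGx⟩
  exact ⟨G⁻¹, isUnit_nonsing_inv_det G hG, c⁻¹, inv_ne_zero hc,
    castMatrix_inv_mulVec_slope hG hc hGx⟩

theorem trans {x y z : ℝ} : GLEquiv x y → GLEquiv y z → GLEquiv x z := by
  rintro ⟨G, hG, hGxy⟩ ⟨H, hH, hHyz⟩
  exact ⟨H * G, by simpa only [det_mul] using hH.mul hG, hGxy.mul hHyz⟩

theorem abs_right (x : ℝ) : GLEquiv x |x| := by
  rcases le_or_gt 0 x with hx | hx
  · rw [abs_of_nonneg hx]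
    exact refl x
  · rw [abs_of_neg hx]
    refine ⟨!![1, 0; 0, -1], by simp [det_fin_two_of], 1, one_ne_zero, ?_⟩
    simp

theorem inv_fract_right (x : ℝ) (hx : Int.fract x ≠ 0) : GLEquiv x (Int.fract x)⁻¹ := by
  refine ⟨!![-⌊x⌋, 1; 1, 0], by simp [det_fin_two_of], Int.fract x, hx, ?_⟩
  rw [castMatrix_mulVec_slope]
  ext i
  fin_cases i
  · simp only [Fin.zero_eta, cons_val_zero, Pi.smul_apply, smul_eq_mul, mul_one, of_apply,
      cons_val_one, Int.cast_neg, Int.cast_one, Int.fract]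
    ring
  · simp [mul_inv_cancel₀ hx]

end GLEquiv

namespace GaussCF

variable {x y : ℝ} {a : ℕ → ℤ}

theorem floor_eq (h : GaussCF x a) : a 0 = ⌊x⌋ := by
  obtain ⟨v, rfl, hv⟩ := h
  exact (hv 0).1

theorem inv_fract (h : GaussCF x a) : GaussCF (Int.fract x)⁻¹ (fun i => a (i + 1)) := by
  obtain ⟨v, rfl, hv⟩ := h
  exact ⟨fun i => v (i + 1), (hv 0).2, fun k => hv (k + 1)⟩

theorem exists_tail (h : GaussCF x a) (hx : Irrational x) (m : ℕ) :
    ∃ y, Irrational y ∧ GLEquiv x y ∧ GaussCF y (fun i => a (m + i)) := by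
  induction m with
  | zero => exact ⟨x, hx, GLEquiv.refl x, by simpa only [zero_add] using h⟩
  | succ m ih =>
    obtain ⟨y, hy, hxy, hya⟩ := ih
    have hfract : Irrational (Int.fract y) := hy.sub_intCast ⌊y⌋
    refine ⟨(Int.fract y)⁻¹, hfract.inv,
      hxy.trans (GLEquiv.inv_fract_right y hfract.ne_zero), ?_⟩
    convert hya.inv_fract using 3
    omega

theorem of_s_get?_eq (hx : Irrational x) (hy : Irrational y) (hxa : GaussCF x a)
    (hya : GaussCF y a) (n : ℕ) :
    (GenContFract.of x).s.get? n = (GenContFract.of y).s.get? n := by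
  induction n generalizing x y a with
  | zero =>
    change (GenContFract.of x).s.head = (GenContFract.of y).s.head
    rw [GenContFract.of_s_head (hx.sub_intCast ⌊x⌋).ne_zero,
      GenContFract.of_s_head (hy.sub_intCast ⌊y⌋).ne_zero, ← hxa.inv_fract.floor_eq,
      ← hya.inv_fract.floor_eq]
  | succ n ih =>
    rw [GenContFract.of_s_succ, GenContFract.of_s_succ]
    exact ih (hx.sub_intCast ⌊x⌋).inv (hy.sub_intCast ⌊y⌋).inv hxa.inv_fract hya.inv_fract

theorem eq_of_irrational (hx : Irrational x) (hy : Irrational y) (hxa : GaussCF x a)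
    (hya : GaussCF y a) : x = y := by
  have hof : GenContFract.of x = GenContFract.of y := by
    refine GenContFract.ext ?_ (Stream'.Seq.ext (hxa.of_s_get?_eq hx hy hya))
    rw [GenContFract.of_h_eq_floor, GenContFract.of_h_eq_floor, ← hxa.floor_eq, ← hya.floor_eq]
  exact tendsto_nhds_unique (hof ▸ GenContFract.of_convergence x) (GenContFract.of_convergence y)

end GaussCF

section Eigenvalue

variable {M : Matrix (Fin 2) (Fin 2) ℤ} {u μ : ℝ}

theorem eigenvalue_sq_sub_trace_mul_add_one (hdet : M.det = 1)
    (h : castMatrix M *ᵥ ![1, u] = μ • ![1, u]) : μ ^ 2 - M.trace * μ + 1 = 0 := by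
  obtain ⟨h0, h1⟩ := castMatrix_mulVec_slope_eq_smul_iff.1 h
  have hdet' : (M 0 0 : ℝ) * M 1 1 - M 0 1 * M 1 0 = 1 := by
    rw [det_fin_two] at hdet
    exact_mod_cast hdet
  rw [trace_fin_two]
  push_cast
  linear_combination (M 1 1 - μ) * h0 - (M 0 1 : ℝ) * h1 - hdet'

theorem three_le_trace (hdet : M.det = 1) (h : castMatrix M *ᵥ ![1, u] = μ • ![1, u])
    (hμ : 1 < μ) : 3 ≤ M.trace := by
  have hq := eigenvalue_sq_sub_trace_mul_add_one hdet h
  have : (2 : ℝ) < M.trace := by nlinarith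
  exact_mod_cast this

theorem two_lt_eigenvalue (hdet : M.det = 1) (h : castMatrix M *ᵥ ![1, u] = μ • ![1, u])
    (hμ : 1 < μ) : 2 < μ := by
  have hq := eigenvalue_sq_sub_trace_mul_add_one hdet h
  have ht : (3 : ℝ) ≤ M.trace := by exact_mod_cast three_le_trace hdet h hμ
  nlinarith

theorem irrational_eigenvalue (hdet : M.det = 1) (h : castMatrix M *ᵥ ![1, u] = μ • ![1, u])
    (hμ : 1 < μ) : Irrational μ := by
  set t := M.trace
  have ht := three_le_trace hdet h hμ
  have hq := eigenvalue_sq_sub_trace_mul_add_one hdet h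
  -- `t ^ 2 - 4` lies strictly between `(t - 1) ^ 2` and `t ^ 2`, so it is not a square
  have hsq : ¬∃ z : ℤ, 2 * μ - t = z := by
    rintro ⟨z, hz⟩
    have hz2 : z ^ 2 = t ^ 2 - 4 := by
      have : (z : ℝ) ^ 2 = t ^ 2 - 4 := by rw [← hz]; linear_combination 4 * hq
      exact_mod_cast this
    have h1 : |z| < t := abs_lt_of_sq_lt_sq (by nlinarith) (by omega)
    have h2 : t - 1 < |z| := by nlinarith [sq_abs z, abs_nonneg z]
    omega
  have hirr : Irrational (2 * μ - t) :=
    irrational_nrt_of_notint_nrt 2 (t ^ 2 - 4) (by push_cast; linear_combination 4 * hq) hsq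
      two_pos
  convert (hirr.add_intCast t).div_natCast two_ne_zero using 1
  push_cast
  ring

theorem irrational_slope (hdet : M.det = 1) (h : castMatrix M *ᵥ ![1, u] = μ • ![1, u])
    (hμ : 1 < μ) : Irrational u := by
  have hirr := irrational_eigenvalue hdet h hμ
  obtain ⟨h0, -⟩ := castMatrix_mulVec_slope_eq_smul_iff.1 h
  have hM01 : M 0 1 ≠ 0 := by
    rintro hz
    exact hirr.ne_int (M 0 0) (by simpa [hz] using h0.symm)
  have hu : u = (μ - M 0 0) / (M 0 1 : ℤ) := by
    field_simp
    linarith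
  rw [hu]
  exact (hirr.sub_intCast _).div_intCast hM01

end Eigenvalue

def logEigenvalues (u : ℝ) : AddSubgroup ℝ where
  carrier := {t | ∃ M : Matrix (Fin 2) (Fin 2) ℤ, M.det = 1 ∧
    castMatrix M *ᵥ ![1, u] = Real.exp t • ![1, u]}
  zero_mem' := ⟨1, det_one, by simp⟩
  add_mem' := by
    rintro s t ⟨M, hM, hMu⟩ ⟨N, hN, hNu⟩
    refine ⟨M * N, by rw [det_mul, hM, hN, mul_one], ?_⟩
    rw [map_mul, ← mulVec_mulVec, hNu, mulVec_smul, hMu, smul_smul, Real.exp_add, mul_comm]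
  neg_mem' := by
    rintro t ⟨M, hM, hMu⟩
    refine ⟨M⁻¹, by rw [det_nonsing_inv, hM, Ring.inverse_one], ?_⟩
    rw [Real.exp_neg]
    exact castMatrix_inv_mulVec_slope (hM ▸ isUnit_one) (Real.exp_ne_zero t) hMu

theorem log_mem_logEigenvalues {M : Matrix (Fin 2) (Fin 2) ℤ} {u μ : ℝ} (hdet : M.det = 1)
    (h : castMatrix M *ᵥ ![1, u] = μ • ![1, u]) (hμ : 0 < μ) :
    Real.log μ ∈ logEigenvalues u :=
  ⟨M, hdet, by rwa [Real.exp_log hμ]⟩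

theorem log_two_lt_of_mem_logEigenvalues {u t : ℝ} (ht : t ∈ logEigenvalues u) (hpos : 0 < t) :
    Real.log 2 < t := by
  obtain ⟨M, hdet, hM⟩ := ht
  rw [Real.log_lt_iff_lt_exp two_pos]
  exact two_lt_eigenvalue hdet hM (Real.one_lt_exp_iff.2 hpos)

theorem exists_logEigenvalues_eq_closure (u : ℝ) :
    ∃ g : ℝ, logEigenvalues u = AddSubgroup.closure {g} := by
  refine (AddSubgroup.dense_or_cyclic _).resolve_left fun hdense => ?_
  have hlog2 := Real.log_pos one_lt_two
  obtain ⟨t, ht, hpos, hlt⟩ := hdense.exists_mem_open (isOpen_Ioo (a := 0) (b := Real.log 2))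
    ⟨Real.log 2 / 2, by constructor <;> linarith⟩
  exact (log_two_lt_of_mem_logEigenvalues ht hpos).not_gt hlt

theorem exists_pow_eq_pow_of_eigenvalues {M N : Matrix (Fin 2) (Fin 2) ℤ} {u μ ν : ℝ}
    (hM : M.det = 1) (hN : N.det = 1) (hMu : castMatrix M *ᵥ ![1, u] = μ • ![1, u])
    (hNu : castMatrix N *ᵥ ![1, u] = ν • ![1, u]) (hμ : 1 < μ) (hν : 1 < ν) :
    ∃ k l : ℕ, 0 < k ∧ 0 < l ∧ μ ^ k = ν ^ l := by
  obtain ⟨g, hg⟩ := exists_logEigenvalues_eq_closure u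
  have hμmem := log_mem_logEigenvalues hM hMu (by linarith)
  have hνmem := log_mem_logEigenvalues hN hNu (by linarith)
  rw [hg, AddSubgroup.mem_closure_singleton] at hμmem hνmem
  obtain ⟨p, hp⟩ := hμmem
  obtain ⟨q, hq⟩ := hνmem
  rw [zsmul_eq_mul] at hp hq
  have hpg : 0 < p * g := hp ▸ Real.log_pos hμ
  have hqg : 0 < q * g := hq ▸ Real.log_pos hν
  have hpq : 0 < p * q := by
    have : (0 : ℝ) < p * q := by nlinarith [mul_pos hpg hqg, sq_nonneg g]
    exact_mod_cast this
  have hsign : |q| * p = |p| * q := by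
    rcases mul_pos_iff.1 hpq with ⟨hp, hq⟩ | ⟨hp, hq⟩
    · rw [abs_of_pos hp, abs_of_pos hq, mul_comm]
    · rw [abs_of_neg hp, abs_of_neg hq]
      ring
  refine ⟨q.natAbs, p.natAbs, Int.natAbs_pos.2 (right_ne_zero_of_mul hpq.ne'),
    Int.natAbs_pos.2 (left_ne_zero_of_mul hpq.ne'), Real.log_injOn_pos
      (Set.mem_Ioi.2 (pow_pos (by linarith) _)) (Set.mem_Ioi.2 (pow_pos (by linarith) _)) ?_⟩
  have hsign' : |(q : ℝ)| * p = |(p : ℝ)| * q := by exact_mod_cast hsign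
  rw [Real.log_pow, Real.log_pow, ← hp, ← hq, Nat.cast_natAbs, Nat.cast_natAbs, Int.cast_abs,
    Int.cast_abs]
  linear_combination g * hsign'

theorem MapsSlope.exists_conj_eigenvalue {G N : Matrix (Fin 2) (Fin 2) ℤ} {x y ν : ℝ}
    (hG : IsUnit G.det) (hGxy : MapsSlope G x y) (hN : N.det = 1)
    (hNy : castMatrix N *ᵥ ![1, y] = ν • ![1, y]) :
    ∃ M : Matrix (Fin 2) (Fin 2) ℤ, M.det = 1 ∧
      castMatrix M *ᵥ ![1, x] = ν • ![1, x] := by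
  obtain ⟨c, hc, hGx⟩ := hGxy
  refine ⟨G⁻¹ * N * G, ?_, ?_⟩
  · rw [det_mul, det_mul, hN, mul_one, ← det_mul, nonsing_inv_mul G hG, det_one]
  · rw [map_mul, map_mul, ← mulVec_mulVec, ← mulVec_mulVec, hGx, mulVec_smul, hNy, smul_smul,
      mulVec_smul, castMatrix_inv_mulVec_slope hG hc hGx, smul_smul, mul_comm c ν, mul_assoc,
      mul_inv_cancel₀ hc, mul_one]

theorem MapsSlope.exists_mul_pow_eq_pow_mul {A B G : Matrix (Fin 2) (Fin 2) ℤ} {x y μ ν : ℝ}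
    (hA : A.det = 1) (hB : B.det = 1) (hAx : castMatrix A *ᵥ ![1, x] = μ • ![1, x])
    (hBy : castMatrix B *ᵥ ![1, y] = ν • ![1, y]) (hμ : 1 < μ) (hν : 1 < ν)
    (hx : Irrational x) (hG : IsUnit G.det) (hGxy : MapsSlope G x y) :
    ∃ k l : ℕ, 0 < k ∧ 0 < l ∧ G * A ^ k = B ^ l * G := by
  obtain ⟨M, hM, hMx⟩ := hGxy.exists_conj_eigenvalue hG hB hBy
  obtain ⟨k, l, hk, hl, hkl⟩ := exists_pow_eq_pow_of_eigenvalues hA hM hAx hMx hμ hν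
  refine ⟨k, l, hk, hl, eq_of_castMatrix_mulVec_slope_eq hx ?_⟩
  obtain ⟨c, -, hGx⟩ := hGxy
  rw [map_mul, map_mul, map_pow, map_pow, ← mulVec_mulVec, ← mulVec_mulVec,
    pow_mulVec_of_mulVec_eq_smul hAx, mulVec_smul, hGx, mulVec_smul,
    pow_mulVec_of_mulVec_eq_smul hBy, smul_smul, smul_smul, hkl, mul_comm]

theorem stmt15_general
    (A B : Matrix.SpecialLinearGroup (Fin 2) ℤ)
    (uA uB muA muB : ℝ) (hmuA : 1 < muA) (hmuB : 1 < muB)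
    (hA0 : ((A : Matrix (Fin 2) (Fin 2) ℤ) 0 0 : ℝ) +
      ((A : Matrix (Fin 2) (Fin 2) ℤ) 0 1 : ℝ) * uA = muA)
    (hA1 : ((A : Matrix (Fin 2) (Fin 2) ℤ) 1 0 : ℝ) +
      ((A : Matrix (Fin 2) (Fin 2) ℤ) 1 1 : ℝ) * uA = muA * uA)
    (hB0 : ((B : Matrix (Fin 2) (Fin 2) ℤ) 0 0 : ℝ) +
      ((B : Matrix (Fin 2) (Fin 2) ℤ) 0 1 : ℝ) * uB = muB)
    (hB1 : ((B : Matrix (Fin 2) (Fin 2) ℤ) 1 0 : ℝ) +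
      ((B : Matrix (Fin 2) (Fin 2) ℤ) 1 1 : ℝ) * uB = muB * uB)
    (a b : ℕ → ℤ) (hcfA : GaussCF |uA| a) (hcfB : GaussCF |uB| b)
    (htail : ∃ m n : ℕ, ∀ i : ℕ, a (m + i) = b (n + i)) :
    ∃ k l : ℤ, k ≠ 0 ∧ l ≠ 0 ∧ ∃ C : Matrix (Fin 2) (Fin 2) ℤ,
      (C.det = 1 ∨ C.det = -1) ∧
      (C * ((A ^ k : Matrix.SpecialLinearGroup (Fin 2) ℤ) : Matrix (Fin 2) (Fin 2) ℤ) =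
          ((B ^ l : Matrix.SpecialLinearGroup (Fin 2) ℤ) : Matrix (Fin 2) (Fin 2) ℤ) * C ∨
        C * ((A ^ k : Matrix.SpecialLinearGroup (Fin 2) ℤ) : Matrix (Fin 2) (Fin 2) ℤ) =
          -((B ^ l : Matrix.SpecialLinearGroup (Fin 2) ℤ) : Matrix (Fin 2) (Fin 2) ℤ) * C) := by
  obtain ⟨m, n, htail⟩ := htail
  have hAu := castMatrix_mulVec_slope_eq_smul_iff.2 ⟨hA0, hA1⟩
  have hBu := castMatrix_mulVec_slope_eq_smul_iff.2 ⟨hB0, hB1⟩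
  have huA := irrational_slope A.prop hAu hmuA
  have huB := irrational_slope B.prop hBu hmuB
  obtain ⟨y, hy, hAy, hcfy⟩ := hcfA.exists_tail huA.abs m
  obtain ⟨z, hz, hBz, hcfz⟩ := hcfB.exists_tail huB.abs n
  have hyz : y = z := hcfy.eq_of_irrational hy hz (by simpa only [htail] using hcfz)
  obtain ⟨G, hG, hGu⟩ : GLEquiv uA uB :=
    (((GLEquiv.abs_right uA).trans hAy).trans (hyz ▸ hBz.symm)).trans (GLEquiv.abs_right uB).symm
  obtain ⟨k, l, hk, hl, hkl⟩ :=
    hGu.exists_mul_pow_eq_pow_mul A.prop B.prop hAu hBu hmuA hmuB huA hG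
  refine ⟨k, l, by exact_mod_cast hk.ne', by exact_mod_cast hl.ne', G, Int.isUnit_iff.1 hG,
    Or.inl ?_⟩
  simpa only [zpow_natCast, Matrix.SpecialLinearGroup.coe_pow] using hkl

/-- Let `A, B ∈ SL(2,ℤ)` with trace `> 2`, and let `u_A, u_B` be the slopes
of their expanding eigenspaces (`A·(1,u_A)ᵀ = μ_A·(1,u_A)ᵀ` with `μ_A > 1`, and similarly
for `B`). Let `[a₀; a₁, …]`, `[b₀; b₁, …]` be the continued fraction expansions of `|u_A|`
and `|u_B|`. If there exist `m, n ≥ 0` with `a_{m+i} = b_{n+i}` for all `i ≥ 0`, then there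
are nonzero integers `k, l` and `C ∈ GL(2,ℤ)` with `C·Aᵏ·C⁻¹ = Bˡ` or `C·Aᵏ·C⁻¹ = −Bˡ`. -/
theorem stmt15
    (A B : Matrix.SpecialLinearGroup (Fin 2) ℤ)
    (hAtr : 2 < (A : Matrix (Fin 2) (Fin 2) ℤ).trace)
    (hBtr : 2 < (B : Matrix (Fin 2) (Fin 2) ℤ).trace)
    (uA uB muA muB : ℝ) (hmuA : 1 < muA) (hmuB : 1 < muB)
    (hA0 : ((A : Matrix (Fin 2) (Fin 2) ℤ) 0 0 : ℝ) +
      ((A : Matrix (Fin 2) (Fin 2) ℤ) 0 1 : ℝ) * uA = muA)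
    (hA1 : ((A : Matrix (Fin 2) (Fin 2) ℤ) 1 0 : ℝ) +
      ((A : Matrix (Fin 2) (Fin 2) ℤ) 1 1 : ℝ) * uA = muA * uA)
    (hB0 : ((B : Matrix (Fin 2) (Fin 2) ℤ) 0 0 : ℝ) +
      ((B : Matrix (Fin 2) (Fin 2) ℤ) 0 1 : ℝ) * uB = muB)
    (hB1 : ((B : Matrix (Fin 2) (Fin 2) ℤ) 1 0 : ℝ) +
      ((B : Matrix (Fin 2) (Fin 2) ℤ) 1 1 : ℝ) * uB = muB * uB)
    (a b : ℕ → ℤ) (hcfA : GaussCF |uA| a) (hcfB : GaussCF |uB| b)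
    (htail : ∃ m n : ℕ, ∀ i : ℕ, a (m + i) = b (n + i)) :
    ∃ k l : ℤ, k ≠ 0 ∧ l ≠ 0 ∧ ∃ C : Matrix (Fin 2) (Fin 2) ℤ,
      (C.det = 1 ∨ C.det = -1) ∧
      (C * ((A ^ k : Matrix.SpecialLinearGroup (Fin 2) ℤ) : Matrix (Fin 2) (Fin 2) ℤ) =
          ((B ^ l : Matrix.SpecialLinearGroup (Fin 2) ℤ) : Matrix (Fin 2) (Fin 2) ℤ) * C ∨
        C * ((A ^ k : Matrix.SpecialLinearGroup (Fin 2) ℤ) : Matrix (Fin 2) (Fin 2) ℤ) =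
          -((B ^ l : Matrix.SpecialLinearGroup (Fin 2) ℤ) : Matrix (Fin 2) (Fin 2) ℤ) * C) :=
  stmt15_general A B uA uB muA muB hmuA hmuB hA0 hA1 hB0 hB1 a b hcfA hcfB htail
end
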